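/- arXiv:1905.00113 — 2 statements merged into one kernel-verified Lean document; each statement's English description precedes it below -/
import Mathlib

section
/- Let Φ be a frame and Ψ a Bessel sequence with ‖T_Φ − T_Ψ‖ ≤ μ < √m_Φ/2. Then the map Γ sending the approximately dual Φ_Θ^{ad}(A) of Φ to the approximately dual Ψ_{Θ_ba}^{ad}(A) of Ψ, with Θ_ba = P_{ker T_Ψ} U_{Φ_Θ^{ad}(A)}, is a bijection between the set of approximately dual frames of Φ and the set of approximately dual frames of Ψ. -/
open ContinuousLinearMap MeasureTheory
open scoped InnerProductSpace ComplexConjugate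

noncomputable section

notation "ℓ²" => lp (fun _ : ℕ => ℂ) 2

variable {H : Type} [NormedAddCommGroup H] [InnerProductSpace ℂ H] [CompleteSpace H]

/-- `Φ = (φₙ)` is a frame for `H` with lower bound `m` and upper bound `M`. -/
def IsFrame (φ : ℕ → H) (m M : ℝ) : Prop :=
  0 < m ∧ 0 < M ∧ ∀ f : H,
    m * ‖f‖ ^ 2 ≤ ∑' n, ‖(inner ℂ (φ n) f : ℂ)‖ ^ 2 ∧
    ∑' n, ‖(inner ℂ (φ n) f : ℂ)‖ ^ 2 ≤ M * ‖f‖ ^ 2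

/-- `Φ = (φₙ)` is a Bessel sequence with bound `M`. -/
def IsBessel (φ : ℕ → H) (M : ℝ) : Prop :=
  0 < M ∧ ∀ f : H, ∑' n, ‖(inner ℂ (φ n) f : ℂ)‖ ^ 2 ≤ M * ‖f‖ ^ 2

/-- `U` is the analysis operator of the sequence `Φ = (φₙ)`, i.e. `U f = (⟨f, φₙ⟩)ₙ`. -/
def IsAnalysis (φ : ℕ → H) (U : H →L[ℂ] ℓ²) : Prop :=
  ∀ (f : H) (n : ℕ), U f n = (inner ℂ (φ n) f : ℂ)

/-- Orthogonal projection onto a closed submodule, as an endomorphism. -/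
def orthProj {E : Type} [NormedAddCommGroup E] [InnerProductSpace ℂ E] [CompleteSpace E]
    (K : Submodule ℂ E) (hK : IsClosed (K : Set E)) : E →L[ℂ] E :=
  haveI := hK.completeSpace_coe
  K.subtypeL.comp (K.orthogonalProjectionOnto)

/-- Orthogonal projection onto a closed submodule, with values in the submodule. -/
def orthProjTo {E : Type} [NormedAddCommGroup E] [InnerProductSpace ℂ E] [CompleteSpace E]
    (K : Submodule ℂ E) (hK : IsClosed (K : Set E)) : E →L[ℂ] K :=
  haveI := hK.completeSpace_coe
  K.orthogonalProjectionOnto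

/-- The gap `δ(X, Y) = ‖(Id - P_Y)|_X‖` from `X` to a closed subspace `Y`. -/
def gap {E : Type} [NormedAddCommGroup E] [InnerProductSpace ℂ E] [CompleteSpace E]
    (X Y : Submodule ℂ E) (hY : IsClosed (Y : Set E)) : ℝ :=
  ‖(ContinuousLinearMap.id ℂ E - orthProj Y hY).comp X.subtypeL‖

/-!
An approximately dual `D = A* S_Φ⁻¹ T_Φ + Θ*` of `Φ` is determined by `T_Φ D* = A` together with
`Θ`, and `Γ` keeps `A` while replacing `Θ` by `P_{ker T_Ψ} D*`. Since `Γ D ∘ T_Ψ* = (T_Φ D*)*`,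
`Γ` is injective as soon as `P_{ker T_Ψ}` is injective on `ker T_Φ`, and it reaches every
approximately dual of `Ψ` as soon as `P_{ker T_Ψ}` maps `ker T_Φ` onto `ker T_Ψ`.

Both properties come from the gaps between the kernels. If `T*` is bounded below by `c`, so is `T`
on `(ker T)ᗮ`, the closure of the range of `T*`; with `‖T_Φ - T_Ψ‖ ≤ μ` this gives
`δ(ker T_Φ, ker T_Ψ) ≤ μ / (√m_Φ - μ)` and `δ(ker T_Ψ, ker T_Φ) ≤ μ / √m_Φ`, both `< 1` when
`μ < √m_Φ / 2`. A gap `δ(X, Y) < 1` makes `P_Y` injective on `X`, and `δ(Y, X) < 1` makes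
`P_Y P_X` invertible on `Y` by a Neumann series.
-/

section OrthogonalProjection

variable {E : Type} [NormedAddCommGroup E] [InnerProductSpace ℂ E] [CompleteSpace E]
  {X Y : Submodule ℂ E} (hX : IsClosed (X : Set E)) (hY : IsClosed (Y : Set E))

theorem orthProj_mem (x : E) : orthProj X hX x ∈ X :=
  (orthProjTo X hX x).2

theorem orthProj_eq_self {x : E} (hx : x ∈ X) : orthProj X hX x = x := by
  have := hX.completeSpace_coe
  exact Submodule.starProjection_eq_self_iff.2 hx

theorem sub_orthProj_mem_orthogonal (x : E) : x - orthProj X hX x ∈ Xᗮ := by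
  have := hX.completeSpace_coe
  exact X.sub_starProjection_mem_orthogonal x

theorem norm_sub_orthProj_le_gap {x : E} (hx : x ∈ X) :
    ‖x - orthProj Y hY x‖ ≤ gap X Y hY * ‖x‖ :=
  ((ContinuousLinearMap.id ℂ E - orthProj Y hY).comp X.subtypeL).le_opNorm ⟨x, hx⟩

theorem eq_zero_of_orthProj_eq_zero (hgap : gap X Y hY < 1) {x : E} (hx : x ∈ X)
    (h : orthProj Y hY x = 0) : x = 0 := by
  have hle := norm_sub_orthProj_le_gap hY hx
  rw [h, sub_zero] at hle
  exact norm_le_zero_iff.1 (by nlinarith [norm_nonneg x])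

theorem isUnit_orthProjTo_comp_orthProj (hgap : gap Y X hX < 1) :
    IsUnit (orthProjTo Y hY ∘L orthProj X hX ∘L Y.subtypeL) := by
  have := hY.completeSpace_coe
  set R := orthProjTo Y hY ∘L orthProj X hX ∘L Y.subtypeL
  -- `1 - R` is the compression to `Y` of `(Id - P_X)|_Y`, whose norm is the gap.
  have hsub : 1 - R = orthProjTo Y hY ∘L
      ((ContinuousLinearMap.id ℂ E - orthProj X hX).comp Y.subtypeL) := by
    ext y
    simp [R, orthProjTo, Submodule.orthogonalProjectionOnto_mem_subspace_eq_self]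
  have hnorm : ‖1 - R‖ < 1 := by
    rw [hsub]
    exact ((opNorm_comp_le _ _).trans
      (mul_le_of_le_one_left (norm_nonneg _) Y.orthogonalProjectionOnto_norm_le)).trans_lt hgap
  simpa using (Units.oneSub (1 - R) hnorm).isUnit

theorem exists_orthProj_comp_eq {F : Type*} [NormedAddCommGroup F] [NormedSpace ℂ F]
    (hgap : gap Y X hX < 1) (Ξ : F →L[ℂ] E) (hΞ : ∀ v, Ξ v ∈ Y) :
    ∃ Θ : F →L[ℂ] E, (∀ v, Θ v ∈ X) ∧ orthProj Y hY ∘L Θ = Ξ := by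
  obtain ⟨R, hR⟩ := isUnit_orthProjTo_comp_orthProj hX hY hgap
  refine ⟨orthProj X hX ∘L Y.subtypeL ∘L ↑R⁻¹ ∘L orthProjTo Y hY ∘L Ξ,
    fun v => orthProj_mem hX _, ?_⟩
  ext v
  have hRR := congr($(R.mul_inv) (orthProjTo Y hY (Ξ v)))
  rw [mul_apply_eq_comp, one_apply_eq_self, hR] at hRR
  exact (congrArg Subtype.val hRR).trans (orthProj_eq_self hY (hΞ v))

end OrthogonalProjection

theorem lp.norm_sq_eq_tsum_norm_sq {ι : Type*} {E : ι → Type*} [∀ i, NormedAddCommGroup (E i)]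
    (f : lp E 2) : ‖f‖ ^ 2 = ∑' i, ‖f i‖ ^ 2 := by
  simpa using lp.norm_rpow_eq_tsum (p := 2) (by norm_num) f

theorem IsFrame.sqrt_mul_norm_le {E : Type} [NormedAddCommGroup E] [InnerProductSpace ℂ E]
    {φ : ℕ → E} {U : E →L[ℂ] ℓ²} {m M : ℝ} (hF : IsFrame φ m M)
    (hU : IsAnalysis φ U) (g : E) : Real.sqrt m * ‖g‖ ≤ ‖U g‖ := by
  have hsq : m * ‖g‖ ^ 2 ≤ ‖U g‖ ^ 2 := by
    simpa only [lp.norm_sq_eq_tsum_norm_sq, hU g] using (hF.2.2 g).1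
  refine (pow_le_pow_iff_left₀ (by positivity) (norm_nonneg _) two_ne_zero).1 ?_
  rwa [mul_pow, Real.sq_sqrt hF.1.le]

section KernelGap

variable {K F : Type} [NormedAddCommGroup K] [InnerProductSpace ℂ K] [CompleteSpace K]
  [NormedAddCommGroup F] [InnerProductSpace ℂ F]

def kerProj (T : K →L[ℂ] F) : K →L[ℂ] K :=
  orthProj (LinearMap.ker (T : K →ₗ[ℂ] F)) (isClosed_ker T)

theorem apply_kerProj (T : K →L[ℂ] F) (x : K) : T (kerProj T x) = 0 :=
  orthProj_mem (isClosed_ker T) x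

theorem comp_kerProj (T : K →L[ℂ] F) : T ∘L kerProj T = 0 :=
  ext (apply_kerProj T)

theorem sub_mul_norm_le_norm_adjoint_apply [CompleteSpace F] {T₁ T₂ : K →L[ℂ] F} {c μ : ℝ}
    (hT₁ : ∀ g, c * ‖g‖ ≤ ‖adjoint T₁ g‖) (hμ : ‖T₁ - T₂‖ ≤ μ) (g : F) :
    (c - μ) * ‖g‖ ≤ ‖adjoint T₂ g‖ := by
  have hdiff : ‖adjoint T₁ g - adjoint T₂ g‖ ≤ μ * ‖g‖ := by
    rw [← sub_apply, ← map_sub]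
    refine (le_opNorm _ g).trans (mul_le_mul_of_nonneg_right ?_ (norm_nonneg g))
    rwa [LinearIsometryEquiv.norm_map]
  linarith [norm_sub_norm_le (adjoint T₁ g) (adjoint T₂ g), hT₁ g]

theorem mul_norm_le_norm_apply_of_mem_orthogonal_ker [CompleteSpace F] {T : K →L[ℂ] F} {c : ℝ}
    (hT : ∀ g, c * ‖g‖ ≤ ‖adjoint T g‖) {z : K}
    (hz : z ∈ (LinearMap.ker (T : K →ₗ[ℂ] F))ᗮ) : c * ‖z‖ ≤ ‖T z‖ := by
  rw [T.orthogonal_ker, ← SetLike.mem_coe, Submodule.topologicalClosure_coe] at hz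
  refine closure_minimal (t := {w | c * ‖w‖ ≤ ‖T w‖}) ?_
    (isClosed_le (by fun_prop) (by fun_prop)) hz
  rintro _ ⟨g, rfl⟩
  change c * ‖adjoint T g‖ ≤ ‖T (adjoint T g)‖
  -- `c ‖g‖ ‖T* g‖ ≤ ‖T* g‖² = re ⟪T T* g, g⟫ ≤ ‖T T* g‖ ‖g‖`
  have hsq : ‖adjoint T g‖ ^ 2 ≤ ‖T (adjoint T g)‖ * ‖g‖ := by
    rw [apply_norm_sq_eq_inner_adjoint_left, adjoint_adjoint]
    exact (RCLike.re_le_norm _).trans (norm_inner_le_norm _ _)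
  rcases (norm_nonneg g).eq_or_lt with hg | hg
  · simp [norm_eq_zero.1 hg.symm]
  · refine le_of_mul_le_mul_left ?_ hg
    nlinarith [hT g, norm_nonneg (adjoint T g)]

theorem gap_ker_le [CompleteSpace F] {T₁ T₂ : K →L[ℂ] F} {c μ : ℝ} (hc : 0 < c)
    (hT₂ : ∀ g, c * ‖g‖ ≤ ‖adjoint T₂ g‖) (hμ : ‖T₁ - T₂‖ ≤ μ) :
    gap (LinearMap.ker (T₁ : K →ₗ[ℂ] F)) (LinearMap.ker (T₂ : K →ₗ[ℂ] F)) (isClosed_ker T₂)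
      ≤ μ / c := by
  refine opNorm_le_bound _ (div_nonneg ((norm_nonneg _).trans hμ) hc.le) fun ⟨x, hx⟩ => ?_
  change ‖x - kerProj T₂ x‖ ≤ μ / c * ‖x‖
  have hT₁x : T₁ x = 0 := hx
  rw [div_mul_eq_mul_div, le_div_iff₀ hc, mul_comm]
  calc c * ‖x - kerProj T₂ x‖ ≤ ‖T₂ (x - kerProj T₂ x)‖ :=
        mul_norm_le_norm_apply_of_mem_orthogonal_ker hT₂ (sub_orthProj_mem_orthogonal _ x)
    _ = ‖(T₁ - T₂) x‖ := by
        rw [map_sub, apply_kerProj, sub_apply, hT₁x, zero_sub, sub_zero, norm_neg]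
    _ ≤ μ * ‖x‖ := (le_opNorm _ x).trans (mul_le_mul_of_nonneg_right hμ (norm_nonneg x))

end KernelGap

section ApproxDuals

variable {K F : Type} [NormedAddCommGroup K] [InnerProductSpace ℂ K] [CompleteSpace K]
  [NormedAddCommGroup F] [InnerProductSpace ℂ F] [CompleteSpace F]

/-- The synthesis operators `A* S⁻¹ T + Θ*` of the approximately duals `X_Θ^{ad}(A)`. -/
def approxDuals (T : K →L[ℂ] F) (Sinv : F →L[ℂ] F) : Set (K →L[ℂ] F) :=
  {D | ∃ (A : F →L[ℂ] F) (Θ : F →L[ℂ] K), ‖ContinuousLinearMap.id ℂ F - A‖ < 1 ∧ T ∘L Θ = 0 ∧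
    D = adjoint A ∘L (Sinv ∘L T) + adjoint Θ}

/-- The map `Γ`, written on synthesis operators. -/
def approxDualTransfer (TΦ TΨ : K →L[ℂ] F) (SΨinv : F →L[ℂ] F) (D : K →L[ℂ] F) : K →L[ℂ] F :=
  adjoint (TΦ ∘L adjoint D) ∘L (SΨinv ∘L TΨ) + adjoint (kerProj TΨ ∘L adjoint D)

variable {T TΦ TΨ : K →L[ℂ] F} {Sinv SΦinv SΨinv : F →L[ℂ] F}

theorem adjoint_approxDual (A : F →L[ℂ] F) (Θ : F →L[ℂ] K) :
    adjoint (adjoint A ∘L (Sinv ∘L T) + adjoint Θ) = adjoint T ∘L adjoint Sinv ∘L A + Θ := by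
  simp only [map_add, adjoint_comp, adjoint_adjoint, comp_assoc]

theorem comp_adjoint_approxDual (hS : Sinv ∘L (T ∘L adjoint T) = ContinuousLinearMap.id ℂ F)
    {A : F →L[ℂ] F} {Θ : F →L[ℂ] K} (hΘ : T ∘L Θ = 0) :
    T ∘L adjoint (adjoint A ∘L (Sinv ∘L T) + adjoint Θ) = A := by
  have hS' : (T ∘L adjoint T) ∘L adjoint Sinv = ContinuousLinearMap.id ℂ F := by
    simpa only [adjoint_comp, adjoint_adjoint, adjoint_id] using congrArg adjoint hS
  rw [adjoint_approxDual, comp_add, hΘ, add_zero, ← comp_assoc, ← comp_assoc, hS', id_comp]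

theorem approxDualTransfer_comp_adjoint
    (hS : SΨinv ∘L (TΨ ∘L adjoint TΨ) = ContinuousLinearMap.id ℂ F) (D : K →L[ℂ] F) :
    approxDualTransfer TΦ TΨ SΨinv D ∘L adjoint TΨ = adjoint (TΦ ∘L adjoint D) := by
  have hP : adjoint (kerProj TΨ ∘L adjoint D) ∘L adjoint TΨ = 0 := by
    rw [← adjoint_comp, ← comp_assoc, comp_kerProj, zero_comp, map_zero]
  rw [approxDualTransfer, add_comp, hP, add_zero, comp_assoc, comp_assoc, hS, comp_id]

theorem approxDualTransfer_mapsTo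
    (hS : SΦinv ∘L (TΦ ∘L adjoint TΦ) = ContinuousLinearMap.id ℂ F) :
    Set.MapsTo (approxDualTransfer TΦ TΨ SΨinv) (approxDuals TΦ SΦinv) (approxDuals TΨ SΨinv) := by
  rintro _ ⟨A, Θ, hA, hΘ, rfl⟩
  refine ⟨A, kerProj TΨ ∘L adjoint (adjoint A ∘L (SΦinv ∘L TΦ) + adjoint Θ), hA, ?_, ?_⟩
  · rw [← comp_assoc, comp_kerProj, zero_comp]
  · rw [approxDualTransfer, comp_adjoint_approxDual hS hΘ]

theorem approxDualTransfer_injective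
    (hS : SΨinv ∘L (TΨ ∘L adjoint TΨ) = ContinuousLinearMap.id ℂ F)
    (hgap : gap (LinearMap.ker (TΦ : K →ₗ[ℂ] F)) (LinearMap.ker (TΨ : K →ₗ[ℂ] F))
      (isClosed_ker TΨ) < 1) :
    Function.Injective (approxDualTransfer TΦ TΨ SΨinv) := by
  intro D₁ D₂ h
  have hT : TΦ ∘L adjoint D₁ = TΦ ∘L adjoint D₂ := adjoint.injective <| by
    rw [← approxDualTransfer_comp_adjoint hS, h, approxDualTransfer_comp_adjoint hS]
  have hP : kerProj TΨ ∘L adjoint D₁ = kerProj TΨ ∘L adjoint D₂ := by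
    rw [approxDualTransfer, approxDualTransfer, hT] at h
    exact adjoint.injective (add_left_cancel h)
  refine adjoint.injective (ext fun v => sub_eq_zero.1 ?_)
  refine eq_zero_of_orthProj_eq_zero (isClosed_ker TΨ) hgap ?_ ?_
  · change TΦ (adjoint D₁ v - adjoint D₂ v) = 0
    rw [map_sub, sub_eq_zero]
    exact congr($hT v)
  · change kerProj TΨ (adjoint D₁ v - adjoint D₂ v) = 0
    rw [map_sub, sub_eq_zero]
    exact congr($hP v)

theorem approxDualTransfer_surjOn
    (hS : SΦinv ∘L (TΦ ∘L adjoint TΦ) = ContinuousLinearMap.id ℂ F)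
    (hgap : gap (LinearMap.ker (TΨ : K →ₗ[ℂ] F)) (LinearMap.ker (TΦ : K →ₗ[ℂ] F))
      (isClosed_ker TΦ) < 1) :
    Set.SurjOn (approxDualTransfer TΦ TΨ SΨinv) (approxDuals TΦ SΦinv) (approxDuals TΨ SΨinv) := by
  rintro _ ⟨B, Ξ, hB, hΞ, rfl⟩
  set Ξ₀ := Ξ - kerProj TΨ ∘L adjoint TΦ ∘L adjoint SΦinv ∘L B
  have hΞ₀ : ∀ v, Ξ₀ v ∈ LinearMap.ker (TΨ : K →ₗ[ℂ] F) := fun v => by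
    change TΨ (Ξ v - kerProj TΨ _) = 0
    rw [map_sub, apply_kerProj, sub_zero]
    exact congr($hΞ v)
  obtain ⟨Θ, hΘ, hPΘ⟩ := exists_orthProj_comp_eq (isClosed_ker TΦ) (isClosed_ker TΨ) hgap Ξ₀ hΞ₀
  have hΘ' : TΦ ∘L Θ = 0 := ext hΘ
  have hPΘ' : kerProj TΨ ∘L Θ = Ξ₀ := hPΘ
  refine ⟨adjoint B ∘L (SΦinv ∘L TΦ) + adjoint Θ, ⟨B, Θ, hB, hΘ', rfl⟩, ?_⟩
  change _ = adjoint B ∘L (SΨinv ∘L TΨ) + adjoint Ξ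
  rw [approxDualTransfer, comp_adjoint_approxDual hS hΘ', adjoint_approxDual, comp_add, hPΘ',
    add_sub_cancel]

end ApproxDuals

theorem stmt16_general
    (φ : ℕ → H) (mΦ MΦ μ : ℝ)
    (UΦ UΨ : H →L[ℂ] ℓ²) (TΦ TΨ : ℓ² →L[ℂ] H)
    (SΦ SΦinv SΨ SΨinv : H →L[ℂ] H)
    (hUΦ : IsAnalysis φ UΦ)
    (hTΦ : TΦ = adjoint UΦ) (hTΨ : TΨ = adjoint UΨ)
    (hSΦ : SΦ = TΦ ∘L UΦ) (hSΨ : SΨ = TΨ ∘L UΨ)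
    (hSΦ2 : SΦinv ∘L SΦ = ContinuousLinearMap.id ℂ H)
    (hSΨ2 : SΨinv ∘L SΨ = ContinuousLinearMap.id ℂ H)
    (hΦ : IsFrame φ mΦ MΦ)
    (hμ : μ < Real.sqrt mΦ / 2) (hper : ‖TΦ - TΨ‖ ≤ μ) :
    Set.BijOn
      (fun D : ℓ² →L[ℂ] H =>
        adjoint (TΦ ∘L adjoint D) ∘L (SΨinv ∘L TΨ) +
          adjoint
            (orthProj (LinearMap.ker (TΨ : ℓ² →ₗ[ℂ] H)) (ContinuousLinearMap.isClosed_ker TΨ) ∘L adjoint D))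
      {D : ℓ² →L[ℂ] H | ∃ (A : H →L[ℂ] H) (Θ : H →L[ℂ] ℓ²),
        ‖ContinuousLinearMap.id ℂ H - A‖ < 1 ∧ TΦ ∘L Θ = 0 ∧
          D = adjoint A ∘L (SΦinv ∘L TΦ) + adjoint Θ}
      {D : ℓ² →L[ℂ] H | ∃ (A : H →L[ℂ] H) (Θ : H →L[ℂ] ℓ²),
        ‖ContinuousLinearMap.id ℂ H - A‖ < 1 ∧ TΨ ∘L Θ = 0 ∧
          D = adjoint A ∘L (SΨinv ∘L TΨ) + adjoint Θ} := by
  obtain rfl : UΦ = adjoint TΦ := by rw [hTΦ, adjoint_adjoint]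
  obtain rfl : UΨ = adjoint TΨ := by rw [hTΨ, adjoint_adjoint]
  subst hSΦ hSΨ
  have hsqrt : 0 < Real.sqrt mΦ := Real.sqrt_pos.2 hΦ.1
  have hΦlow := hΦ.sqrt_mul_norm_le hUΦ
  have hΨlow := sub_mul_norm_le_norm_adjoint_apply hΦlow hper
  have hgapΦΨ := gap_ker_le (sub_pos.2 (by linarith)) hΨlow hper
  have hgapΨΦ := gap_ker_le hsqrt hΦlow (by rwa [norm_sub_rev])
  refine ⟨approxDualTransfer_mapsTo hSΦ2, (approxDualTransfer_injective hSΨ2 ?_).injOn,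
    approxDualTransfer_surjOn hSΦ2 ?_⟩
  · refine hgapΦΨ.trans_lt ((div_lt_one ?_).2 ?_) <;> linarith
  · refine hgapΨΦ.trans_lt ((div_lt_one hsqrt).2 ?_)
    linarith [(norm_nonneg _).trans hper]

theorem stmt16
    (φ ψ : ℕ → H) (mΦ MΦ MΨ μ : ℝ)
    (UΦ UΨ : H →L[ℂ] ℓ²) (TΦ TΨ : ℓ² →L[ℂ] H)
    (SΦ SΦinv SΨ SΨinv : H →L[ℂ] H)
    (hUΦ : IsAnalysis φ UΦ) (hUΨ : IsAnalysis ψ UΨ)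
    (hTΦ : TΦ = adjoint UΦ) (hTΨ : TΨ = adjoint UΨ)
    (hSΦ : SΦ = TΦ ∘L UΦ) (hSΨ : SΨ = TΨ ∘L UΨ)
    (hSΦ1 : SΦ ∘L SΦinv = ContinuousLinearMap.id ℂ H)
    (hSΦ2 : SΦinv ∘L SΦ = ContinuousLinearMap.id ℂ H)
    (hSΨ1 : SΨ ∘L SΨinv = ContinuousLinearMap.id ℂ H)
    (hSΨ2 : SΨinv ∘L SΨ = ContinuousLinearMap.id ℂ H)
    (hΦ : IsFrame φ mΦ MΦ) (hΨ : IsBessel ψ MΨ)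
    (hμ : μ < Real.sqrt mΦ / 2) (hper : ‖TΦ - TΨ‖ ≤ μ) :
    Set.BijOn
      (fun D : ℓ² →L[ℂ] H =>
        adjoint (TΦ ∘L adjoint D) ∘L (SΨinv ∘L TΨ) +
          adjoint
            (orthProj (LinearMap.ker (TΨ : ℓ² →ₗ[ℂ] H)) (ContinuousLinearMap.isClosed_ker TΨ) ∘L adjoint D))
      {D : ℓ² →L[ℂ] H | ∃ (A : H →L[ℂ] H) (Θ : H →L[ℂ] ℓ²),
        ‖ContinuousLinearMap.id ℂ H - A‖ < 1 ∧ TΦ ∘L Θ = 0 ∧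
          D = adjoint A ∘L (SΦinv ∘L TΦ) + adjoint Θ}
      {D : ℓ² →L[ℂ] H | ∃ (A : H →L[ℂ] H) (Θ : H →L[ℂ] ℓ²),
        ‖ContinuousLinearMap.id ℂ H - A‖ < 1 ∧ TΨ ∘L Θ = 0 ∧
          D = adjoint A ∘L (SΨinv ∘L TΨ) + adjoint Θ} :=
  stmt16_general φ mΦ MΦ μ UΦ UΨ TΦ TΨ SΦ SΦinv SΨ SΨinv hUΦ hTΦ hTΨ hSΦ hSΨ hSΦ2 hSΨ2 hΦ hμ hper

end
end

section
/- Let Φ be a frame with lower bound m_Φ and Ψ a sequence which is d-quadratically close to Φ with q_Λ < 1 for a dual frame Φ̃(Λ) of Φ with upper frame bound M_{Φ̃(Λ)}. Then Ψ is a frame and the canonical approximately duals (for operators A₁, A₂ with ‖Id − Aᵢ‖ < 1) satisfy: if √(m_Φ M_{Φ̃(Λ)}) ≤ 1 − q_Λ, then ‖T_{Φ₀^{ad}(A₁)} − T_{Ψ₀^{ad}(A₂)}‖ ≤ (2√q ‖A₁‖ + √m_Φ ‖A₁ − A₂‖)/m_Φ. -/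
open ContinuousLinearMap MeasureTheory
open scoped InnerProductSpace ComplexConjugate

noncomputable section

variable {H : Type} [NormedAddCommGroup H] [InnerProductSpace ℂ H] [CompleteSpace H]

/-!
Write `R_U = (U* U)⁻¹` for an analysis operator `U`, so that `R_U U*` is the synthesis operator
of the canonical dual. Because `Φ̃(Λ)` is dual to `Φ`, `Id - T_Ψ U_{Φ̃(Λ)} = (T_Φ - T_Ψ) U_{Φ̃(Λ)}`
has norm at most `q_Λ`; taking adjoints, `(1 - q_Λ) ‖f‖ ≤ √M_{Φ̃(Λ)} ‖U_Ψ f‖`, so under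
`√(m_Φ M_{Φ̃(Λ)}) ≤ 1 - q_Λ` the sequence `Ψ` is a frame with lower bound `m_Φ`.

For analysis operators `U`, `V` both bounded below by `m`,
`R_U U* - R_V V* = R_U (U - V)* (Id - P_V) + R_U U* (V - U) R_V V*`, where `P_V = V R_V V*` is an
orthogonal projection and `‖R_U U*‖² = ‖R_U‖ ≤ 1 / m`. Hence the difference of the canonical
dual synthesis operators is at most `2 ‖U_Φ - U_Ψ‖ / m_Φ ≤ 2 √q / m_Φ`, and
`A₁* X - A₂* Y = A₁* (X - Y) + (A₁ - A₂)* Y` finishes the estimate.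
-/
section CanonicalDual

variable {𝕜 E F : Type*} [RCLike 𝕜]
  [NormedAddCommGroup E] [InnerProductSpace 𝕜 E] [CompleteSpace E]
  [NormedAddCommGroup F] [InnerProductSpace 𝕜 F] [CompleteSpace F]
  {U V : E →L[𝕜] F} {R R' : E →L[𝕜] E}

lemma adjoint_eq_self_of_comp_eq_id (hR : (adjoint U ∘L U) ∘L R = .id 𝕜 E) :
    adjoint R = R := by
  have hS : adjoint (adjoint U ∘L U) = adjoint U ∘L U := by
    rw [adjoint_comp, adjoint_adjoint]
  calc adjoint R = adjoint R ∘L ((adjoint U ∘L U) ∘L R) := by rw [hR, comp_id]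
    _ = adjoint ((adjoint U ∘L U) ∘L R) ∘L R := by rw [adjoint_comp, hS]; rfl
    _ = R := by rw [hR, adjoint_id, id_comp]

lemma comp_eq_id_of_comp_eq_id (hR : (adjoint U ∘L U) ∘L R = .id 𝕜 E) :
    R ∘L (adjoint U ∘L U) = .id 𝕜 E := by
  calc R ∘L (adjoint U ∘L U) = adjoint ((adjoint U ∘L U) ∘L R) := by
        rw [adjoint_comp, adjoint_eq_self_of_comp_eq_id hR, adjoint_comp, adjoint_adjoint]
    _ = .id 𝕜 E := by rw [hR, adjoint_id]

lemma adjoint_comp_adjoint_eq (hR : (adjoint U ∘L U) ∘L R = .id 𝕜 E) :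
    adjoint (R ∘L adjoint U) = U ∘L R := by
  rw [adjoint_comp, adjoint_adjoint, adjoint_eq_self_of_comp_eq_id hR]

lemma norm_comp_adjoint_sq (hR : (adjoint U ∘L U) ∘L R = .id 𝕜 E) :
    ‖R ∘L adjoint U‖ ^ 2 = ‖R‖ := by
  have h := norm_adjoint_comp_self (U ∘L R)
  have hcomp : (R ∘L adjoint U) ∘L (U ∘L R) = R := by
    ext x; exact congrArg R (DFunLike.congr_fun hR x)
  have hadj : adjoint (U ∘L R) = R ∘L adjoint U := by
    rw [← adjoint_comp_adjoint_eq hR, adjoint_adjoint]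
  rw [hadj, hcomp] at h
  rw [sq, h, ← hadj, LinearIsometryEquiv.norm_map]

lemma isStarProjection_comp_comp_adjoint (hR : (adjoint U ∘L U) ∘L R = .id 𝕜 E) :
    IsStarProjection (U ∘L R ∘L adjoint U) where
  isIdempotentElem := by
    ext y; exact congrArg U (DFunLike.congr_fun (comp_eq_id_of_comp_eq_id hR) _)
  isSelfAdjoint := by
    rw [isSelfAdjoint_iff', adjoint_comp, adjoint_comp_adjoint_eq hR, comp_assoc]

lemma mul_norm_le_norm_adjoint_comp_self_apply {m : ℝ} (hU : ∀ f, m * ‖f‖ ^ 2 ≤ ‖U f‖ ^ 2)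
    (f : E) : m * ‖f‖ ≤ ‖(adjoint U ∘L U) f‖ := by
  have h : m * ‖f‖ ^ 2 ≤ ‖f‖ * ‖(adjoint U ∘L U) f‖ :=
    calc m * ‖f‖ ^ 2 ≤ ‖U f‖ ^ 2 := hU f
      _ = RCLike.re (inner 𝕜 f ((adjoint U ∘L U) f)) := by
        rw [comp_apply, adjoint_inner_right, ← norm_sq_eq_re_inner]
      _ ≤ ‖f‖ * ‖(adjoint U ∘L U) f‖ := re_inner_le_norm _ _
  rcases (norm_nonneg f).eq_or_lt with hf | hf
  · simp [← hf]
  · nlinarith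

lemma norm_le_inv_of_comp_eq_id {m : ℝ} (hm : 0 < m) (hU : ∀ f, m * ‖f‖ ^ 2 ≤ ‖U f‖ ^ 2)
    (hR : (adjoint U ∘L U) ∘L R = .id 𝕜 E) : ‖R‖ ≤ m⁻¹ := by
  refine opNorm_le_bound _ (inv_nonneg.2 hm.le) fun g => ?_
  have h := mul_norm_le_norm_adjoint_comp_self_apply hU (R g)
  rw [← comp_apply, hR, id_apply] at h
  rw [inv_mul_eq_div, le_div_iff₀ hm]
  linarith

lemma norm_comp_adjoint_le {m : ℝ} (hm : 0 < m) (hU : ∀ f, m * ‖f‖ ^ 2 ≤ ‖U f‖ ^ 2)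
    (hR : (adjoint U ∘L U) ∘L R = .id 𝕜 E) : ‖R ∘L adjoint U‖ ≤ (√m)⁻¹ := by
  rw [← Real.sqrt_inv, Real.le_sqrt (norm_nonneg _) (inv_nonneg.2 hm.le),
    norm_comp_adjoint_sq hR]
  exact norm_le_inv_of_comp_eq_id hm hU hR

lemma comp_adjoint_sub_comp_adjoint_eq (hR : (adjoint U ∘L U) ∘L R = .id 𝕜 E)
    (hR' : (adjoint V ∘L V) ∘L R' = .id 𝕜 E) :
    R ∘L adjoint U - R' ∘L adjoint V =
      (R ∘L adjoint (U - V)) ∘L (.id 𝕜 F - V ∘L R' ∘L adjoint V) +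
        ((R ∘L adjoint U) ∘L (V - U)) ∘L (R' ∘L adjoint V) := by
  have hL := DFunLike.congr_fun (comp_eq_id_of_comp_eq_id hR)
  have hR'x := DFunLike.congr_fun hR'
  simp only [comp_apply, ContinuousLinearMap.id_apply] at hL hR'x
  ext x
  simp only [comp_apply, sub_apply, add_apply, ContinuousLinearMap.id_apply, map_sub, hL, hR'x]
  abel

lemma norm_id_sub_comp_comp_adjoint_le_one (hR : (adjoint U ∘L U) ∘L R = .id 𝕜 E) :
    ‖.id 𝕜 F - U ∘L R ∘L adjoint U‖ ≤ 1 :=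
  (isStarProjection_comp_comp_adjoint hR).one_sub.norm_le

lemma norm_comp_adjoint_sub_comp_adjoint_le {m : ℝ} (hm : 0 < m)
    (hU : ∀ f, m * ‖f‖ ^ 2 ≤ ‖U f‖ ^ 2) (hV : ∀ f, m * ‖f‖ ^ 2 ≤ ‖V f‖ ^ 2)
    (hR : (adjoint U ∘L U) ∘L R = .id 𝕜 E) (hR' : (adjoint V ∘L V) ∘L R' = .id 𝕜 E) :
    ‖R ∘L adjoint U - R' ∘L adjoint V‖ ≤ 2 * ‖U - V‖ / m := by
  have h₁ : ‖(R ∘L adjoint (U - V)) ∘L (.id 𝕜 F - V ∘L R' ∘L adjoint V)‖ ≤ m⁻¹ * ‖U - V‖ :=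
    calc _ ≤ ‖R‖ * ‖adjoint (U - V)‖ * ‖.id 𝕜 F - V ∘L R' ∘L adjoint V‖ :=
          (opNorm_comp_le _ _).trans (by gcongr; exact opNorm_comp_le _ _)
      _ ≤ m⁻¹ * ‖U - V‖ * 1 := by
          rw [LinearIsometryEquiv.norm_map]
          gcongr
          · exact norm_le_inv_of_comp_eq_id hm hU hR
          · exact norm_id_sub_comp_comp_adjoint_le_one hR'
      _ = m⁻¹ * ‖U - V‖ := mul_one _
  have h₂ : ‖((R ∘L adjoint U) ∘L (V - U)) ∘L (R' ∘L adjoint V)‖ ≤ m⁻¹ * ‖U - V‖ :=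
    calc _ ≤ ‖R ∘L adjoint U‖ * ‖V - U‖ * ‖R' ∘L adjoint V‖ :=
          (opNorm_comp_le _ _).trans (by gcongr; exact opNorm_comp_le _ _)
      _ ≤ (√m)⁻¹ * ‖U - V‖ * (√m)⁻¹ := by
          rw [norm_sub_rev]
          gcongr
          · exact norm_comp_adjoint_le hm hU hR
          · exact norm_comp_adjoint_le hm hV hR'
      _ = m⁻¹ * ‖U - V‖ := by
          rw [mul_comm, ← mul_assoc, ← mul_inv, Real.mul_self_sqrt hm.le]
  rw [comp_adjoint_sub_comp_adjoint_eq hR hR']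
  calc _ ≤ m⁻¹ * ‖U - V‖ + m⁻¹ * ‖U - V‖ := (norm_add_le _ _).trans (add_le_add h₁ h₂)
    _ = 2 * ‖U - V‖ / m := by ring

end CanonicalDual

lemma norm_comp_sub_comp_le {𝕜 E F G : Type*} [NontriviallyNormedField 𝕜]
    [SeminormedAddCommGroup E] [NormedSpace 𝕜 E] [SeminormedAddCommGroup F] [NormedSpace 𝕜 F]
    [SeminormedAddCommGroup G] [NormedSpace 𝕜 G] (A B : F →L[𝕜] G) (X Y : E →L[𝕜] F) :
    ‖A ∘L X - B ∘L Y‖ ≤ ‖A‖ * ‖X - Y‖ + ‖A - B‖ * ‖Y‖ := by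
  have h : A ∘L X - B ∘L Y = A ∘L (X - Y) + (A - B) ∘L Y := by
    rw [comp_sub, sub_comp]; abel
  rw [h]
  exact (norm_add_le _ _).trans (add_le_add (opNorm_comp_le _ _) (opNorm_comp_le _ _))

lemma lp.norm_sq_eq_tsum {ι : Type*} {G : ι → Type*} [∀ i, NormedAddCommGroup (G i)]
    (x : lp G 2) : ‖x‖ ^ 2 = ∑' i, ‖x i‖ ^ 2 := by
  simpa [Real.rpow_natCast] using lp.norm_rpow_eq_tsum (p := 2) (by norm_num) x

section AnalysisOperator

variable {E : Type} [NormedAddCommGroup E] [InnerProductSpace ℂ E]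

lemma isAnalysis_adjoint_single [CompleteSpace E] (Λ : E →L[ℂ] ℓ²) :
    IsAnalysis (fun n => adjoint Λ (lp.single 2 n (1 : ℂ))) Λ := fun f n => by
  rw [adjoint_inner_left, lp.inner_single_left]
  simp

namespace IsAnalysis

variable {φ ψ : ℕ → E} {U V : E →L[ℂ] ℓ²}

lemma norm_apply_sq (hU : IsAnalysis φ U) (f : E) :
    ‖U f‖ ^ 2 = ∑' n, ‖(inner ℂ (φ n) f : ℂ)‖ ^ 2 := by
  rw [lp.norm_sq_eq_tsum]
  exact tsum_congr fun n => by rw [hU f n]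

lemma opNorm_le_sqrt (hU : IsAnalysis φ U) {M : ℝ} (hM : 0 ≤ M)
    (hbessel : ∀ f, ∑' n, ‖(inner ℂ (φ n) f : ℂ)‖ ^ 2 ≤ M * ‖f‖ ^ 2) : ‖U‖ ≤ √M := by
  refine opNorm_le_bound _ (Real.sqrt_nonneg M) fun f => ?_
  rw [← Real.sqrt_sq (norm_nonneg f), ← Real.sqrt_mul hM]
  exact Real.le_sqrt_of_sq_le (hU.norm_apply_sq f ▸ hbessel f)

lemma opNorm_le_sqrt_tsum (hU : IsAnalysis φ U) (hφ : Summable fun n => ‖φ n‖ ^ 2) :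
    ‖U‖ ≤ √(∑' n, ‖φ n‖ ^ 2) := by
  refine hU.opNorm_le_sqrt (tsum_nonneg fun n => by positivity) fun f => ?_
  have hle : ∀ n, ‖(inner ℂ (φ n) f : ℂ)‖ ^ 2 ≤ ‖φ n‖ ^ 2 * ‖f‖ ^ 2 := fun n => by
    rw [← mul_pow]; gcongr; exact norm_inner_le_norm _ _
  rw [← tsum_mul_right]
  exact ((hφ.mul_right _).of_nonneg_of_le (fun n => by positivity) hle).tsum_le_tsum hle
    (hφ.mul_right _)

lemma sub (hU : IsAnalysis φ U) (hV : IsAnalysis ψ V) :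
    IsAnalysis (fun n => φ n - ψ n) (U - V) := fun f n => by
  rw [sub_apply, lp.coeFn_sub, Pi.sub_apply, hU, hV, inner_sub_left]

lemma add (hU : IsAnalysis φ U) (hV : IsAnalysis ψ V) :
    IsAnalysis (fun n => φ n + ψ n) (U + V) := fun f n => by
  rw [add_apply, lp.coeFn_add, Pi.add_apply, hU, hV, inner_add_left]

lemma comp_of_adjoint_eq_self [CompleteSpace E] (hU : IsAnalysis φ U) {S : E →L[ℂ] E}
    (hS : adjoint S = S) :
    IsAnalysis (fun n => S (φ n)) (U ∘L S) := fun f n => by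
  rw [comp_apply, hU, ← hS, adjoint_inner_right, hS]

lemma norm_inner_apply_le (hU : IsAnalysis φ U) (hV : IsAnalysis ψ V)
    (hs : Summable fun n => ‖ψ n‖ * ‖φ n‖) (f g : E) :
    ‖(inner ℂ (U f) (V g) : ℂ)‖ ≤ (∑' n, ‖ψ n‖ * ‖φ n‖) * (‖f‖ * ‖g‖) := by
  have hle : ∀ n, ‖(inner ℂ (U f n) (V g n) : ℂ)‖ ≤ ‖ψ n‖ * ‖φ n‖ * (‖f‖ * ‖g‖) := fun n => by
    rw [hU, hV]
    calc _ ≤ ‖(inner ℂ (φ n) f : ℂ)‖ * ‖(inner ℂ (ψ n) g : ℂ)‖ := norm_inner_le_norm _ _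
      _ ≤ (‖φ n‖ * ‖f‖) * (‖ψ n‖ * ‖g‖) := by gcongr <;> exact norm_inner_le_norm _ _
      _ = ‖ψ n‖ * ‖φ n‖ * (‖f‖ * ‖g‖) := by ring
  have hs' := hs.mul_right (‖f‖ * ‖g‖)
  rw [lp.inner_eq_tsum, ← tsum_mul_right]
  have hsum := hs'.of_nonneg_of_le (fun _ => norm_nonneg _) hle
  exact (norm_tsum_le_tsum_norm hsum).trans (hsum.tsum_le_tsum hle hs')

lemma opNorm_adjoint_comp_le [CompleteSpace E] (hU : IsAnalysis φ U) (hV : IsAnalysis ψ V)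
    (hs : Summable fun n => ‖ψ n‖ * ‖φ n‖) :
    ‖adjoint V ∘L U‖ ≤ ∑' n, ‖ψ n‖ * ‖φ n‖ := by
  refine opNorm_le_of_re_inner_le (tsum_nonneg fun n => by positivity) fun f g hf hg => ?_
  rw [comp_apply, adjoint_inner_left]
  simpa [hf, hg] using (RCLike.re_le_norm _).trans (norm_inner_apply_le hU hV hs f g)

lemma exists_isFrame (hU : IsAnalysis φ U) {m : ℝ} (hm : 0 < m)
    (hlow : ∀ f, m * ‖f‖ ^ 2 ≤ ‖U f‖ ^ 2) : ∃ M, IsFrame φ m M := by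
  refine ⟨‖U‖ ^ 2 + 1, hm, by positivity, fun f => ?_⟩
  rw [← hU.norm_apply_sq]
  refine ⟨hlow f, ?_⟩
  calc ‖U f‖ ^ 2 ≤ (‖U‖ * ‖f‖) ^ 2 := by gcongr; exact le_opNorm U f
    _ ≤ (‖U‖ ^ 2 + 1) * ‖f‖ ^ 2 := by nlinarith [sq_nonneg ‖f‖]

end IsAnalysis

end AnalysisOperator

section Perturbation

variable {𝕜 E F : Type*} [RCLike 𝕜]
  [NormedAddCommGroup E] [InnerProductSpace 𝕜 E] [CompleteSpace E]
  [NormedAddCommGroup F] [InnerProductSpace 𝕜 F] [CompleteSpace F]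
  {U W : E →L[𝕜] F} {r : ℝ}

lemma mul_norm_le_of_norm_id_sub_adjoint_comp_le (h : ‖.id 𝕜 E - adjoint U ∘L W‖ ≤ r)
    (f : E) : (1 - r) * ‖f‖ ≤ ‖W‖ * ‖U f‖ := by
  have h' : ‖.id 𝕜 E - adjoint W ∘L U‖ ≤ r := by
    rwa [← LinearIsometryEquiv.norm_map adjoint, map_sub, adjoint_id, adjoint_comp,
      adjoint_adjoint] at h
  calc (1 - r) * ‖f‖ ≤ ‖f‖ - ‖(.id 𝕜 E - adjoint W ∘L U) f‖ := by
        linarith [(le_opNorm _ f).trans (mul_le_mul_of_nonneg_right h' (norm_nonneg f))]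
    _ ≤ ‖adjoint W (U f)‖ := by
        simpa using norm_sub_norm_le f (f - adjoint W (U f))
    _ ≤ ‖W‖ * ‖U f‖ := by
        simpa only [LinearIsometryEquiv.norm_map] using le_opNorm (adjoint W) (U f)

lemma mul_norm_sq_le_of_norm_id_sub_adjoint_comp_le {m M : ℝ} (hm : 0 ≤ m) (hM : 0 < M)
    (hW : ‖W‖ ≤ √M) (h : ‖.id 𝕜 E - adjoint U ∘L W‖ ≤ r) (hmr : √(m * M) ≤ 1 - r) (f : E) :
    m * ‖f‖ ^ 2 ≤ ‖U f‖ ^ 2 := by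
  have hsqrt : √M * (√m * ‖f‖) ≤ √M * ‖U f‖ :=
    calc √M * (√m * ‖f‖) = √(m * M) * ‖f‖ := by rw [Real.sqrt_mul hm]; ring
      _ ≤ (1 - r) * ‖f‖ := by gcongr
      _ ≤ ‖W‖ * ‖U f‖ := mul_norm_le_of_norm_id_sub_adjoint_comp_le h f
      _ ≤ √M * ‖U f‖ := by gcongr
  have hle := le_of_mul_le_mul_left hsqrt (Real.sqrt_pos.2 hM)
  calc m * ‖f‖ ^ 2 = (√m * ‖f‖) ^ 2 := by rw [mul_pow, Real.sq_sqrt hm]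
    _ ≤ ‖U f‖ ^ 2 := by gcongr

end Perturbation

theorem stmt18_general
    (φ ψ : ℕ → H) (mΦ MΦ md Md q qΛ : ℝ)
    (UΦ UΨ : H →L[ℂ] ℓ²) (TΦ TΨ : ℓ² →L[ℂ] H)
    (SΦ SΦinv SΨ SΨinv A1 A2 : H →L[ℂ] H) (Λ : H →L[ℂ] ℓ²)
    (hUΦ : IsAnalysis φ UΦ) (hUΨ : IsAnalysis ψ UΨ)
    (hTΦ : TΦ = adjoint UΦ) (hTΨ : TΨ = adjoint UΨ)
    (hSΦ : SΦ = TΦ ∘L UΦ) (hSΨ : SΨ = TΨ ∘L UΨ)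
    (hSΦ1 : SΦ ∘L SΦinv = ContinuousLinearMap.id ℂ H)
    (hSΨ1 : SΨ ∘L SΨinv = ContinuousLinearMap.id ℂ H)
    (hΦ : IsFrame φ mΦ MΦ)
    (hΛ : TΦ ∘L Λ = 0)
    (hdual : IsFrame (fun n => SΦinv (φ n) + adjoint Λ (lp.single 2 n (1 : ℂ))) md Md)
    (hqs : Summable fun n => ‖φ n - ψ n‖ ^ 2)
    (hq : q = ∑' n, ‖φ n - ψ n‖ ^ 2)
    (hqΛs : Summable fun n =>
      ‖φ n - ψ n‖ * ‖SΦinv (φ n) + adjoint Λ (lp.single 2 n (1 : ℂ))‖)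
    (hqΛ : qΛ = ∑' n, ‖φ n - ψ n‖ * ‖SΦinv (φ n) + adjoint Λ (lp.single 2 n (1 : ℂ))‖)
    (hcase : Real.sqrt (mΦ * Md) ≤ 1 - qΛ) :
    (∃ mΨ MΨ : ℝ, IsFrame ψ mΨ MΨ) ∧
      ‖adjoint A1 ∘L (SΦinv ∘L TΦ) - adjoint A2 ∘L (SΨinv ∘L TΨ)‖ ≤
        (2 * Real.sqrt q * ‖A1‖ + Real.sqrt mΦ * ‖A1 - A2‖) / mΦ := by
  subst hTΦ hTΨ hSΦ hSΨ
  obtain ⟨hmΦ, -, hΦ⟩ := hΦ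
  have hΦlow : ∀ f, mΦ * ‖f‖ ^ 2 ≤ ‖UΦ f‖ ^ 2 := fun f => hUΦ.norm_apply_sq f ▸ (hΦ f).1
  set Ud := UΦ ∘L SΦinv + Λ
  have hUd : IsAnalysis _ Ud :=
    (hUΦ.comp_of_adjoint_eq_self (adjoint_eq_self_of_comp_eq_id hSΦ1)).add
      (isAnalysis_adjoint_single Λ)
  have hUd_norm : ‖Ud‖ ≤ √Md := hUd.opNorm_le_sqrt hdual.2.1.le fun f => (hdual.2.2 f).2
  have hperturb : ‖.id ℂ H - adjoint UΨ ∘L Ud‖ ≤ qΛ := by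
    have hdualId : adjoint UΦ ∘L Ud = .id ℂ H := by
      rw [comp_add, ← comp_assoc, hSΦ1, hΛ, add_zero]
    rw [← hdualId, ← sub_comp, ← map_sub, hqΛ]
    exact hUd.opNorm_adjoint_comp_le (hUΦ.sub hUΨ) hqΛs
  have hΨlow : ∀ f, mΦ * ‖f‖ ^ 2 ≤ ‖UΨ f‖ ^ 2 :=
    mul_norm_sq_le_of_norm_id_sub_adjoint_comp_le hmΦ.le hdual.2.1 hUd_norm hperturb hcase
  refine ⟨⟨mΦ, hUΨ.exists_isFrame hmΦ hΨlow⟩, ?_⟩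
  calc _ ≤ ‖adjoint A1‖ * ‖SΦinv ∘L adjoint UΦ - SΨinv ∘L adjoint UΨ‖
        + ‖adjoint A1 - adjoint A2‖ * ‖SΨinv ∘L adjoint UΨ‖ := norm_comp_sub_comp_le _ _ _ _
    _ ≤ ‖A1‖ * (2 * ‖UΦ - UΨ‖ / mΦ) + ‖A1 - A2‖ * (√mΦ)⁻¹ := by
        rw [← map_sub, LinearIsometryEquiv.norm_map, LinearIsometryEquiv.norm_map]
        gcongr
        · exact norm_comp_adjoint_sub_comp_adjoint_le hmΦ hΦlow hΨlow hSΦ1 hSΨ1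
        · exact norm_comp_adjoint_le hmΦ hΨlow hSΨ1
    _ ≤ ‖A1‖ * (2 * √q / mΦ) + ‖A1 - A2‖ * (√mΦ)⁻¹ := by
        gcongr
        exact hq ▸ (hUΦ.sub hUΨ).opNorm_le_sqrt_tsum hqs
    _ = _ := by
        rw [inv_eq_one_div, ← Real.sqrt_div_self']
        ring

theorem stmt18
    (φ ψ : ℕ → H) (mΦ MΦ md Md q qΛ : ℝ)
    (UΦ UΨ : H →L[ℂ] ℓ²) (TΦ TΨ : ℓ² →L[ℂ] H)
    (SΦ SΦinv SΨ SΨinv A1 A2 : H →L[ℂ] H) (Λ : H →L[ℂ] ℓ²)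
    (hUΦ : IsAnalysis φ UΦ) (hUΨ : IsAnalysis ψ UΨ)
    (hTΦ : TΦ = adjoint UΦ) (hTΨ : TΨ = adjoint UΨ)
    (hSΦ : SΦ = TΦ ∘L UΦ) (hSΨ : SΨ = TΨ ∘L UΨ)
    (hSΦ1 : SΦ ∘L SΦinv = ContinuousLinearMap.id ℂ H)
    (hSΦ2 : SΦinv ∘L SΦ = ContinuousLinearMap.id ℂ H)
    (hSΨ1 : SΨ ∘L SΨinv = ContinuousLinearMap.id ℂ H)
    (hSΨ2 : SΨinv ∘L SΨ = ContinuousLinearMap.id ℂ H)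
    (hΦ : IsFrame φ mΦ MΦ)
    (hΛ : TΦ ∘L Λ = 0)
    (hdual : IsFrame (fun n => SΦinv (φ n) + adjoint Λ (lp.single 2 n (1 : ℂ))) md Md)
    (hqs : Summable fun n => ‖φ n - ψ n‖ ^ 2)
    (hq : q = ∑' n, ‖φ n - ψ n‖ ^ 2)
    (hqΛs : Summable fun n =>
      ‖φ n - ψ n‖ * ‖SΦinv (φ n) + adjoint Λ (lp.single 2 n (1 : ℂ))‖)
    (hqΛ : qΛ = ∑' n, ‖φ n - ψ n‖ * ‖SΦinv (φ n) + adjoint Λ (lp.single 2 n (1 : ℂ))‖)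
    (hqΛlt : qΛ < 1)
    (hA1 : ‖ContinuousLinearMap.id ℂ H - A1‖ < 1)
    (hA2 : ‖ContinuousLinearMap.id ℂ H - A2‖ < 1)
    (hcase : Real.sqrt (mΦ * Md) ≤ 1 - qΛ) :
    (∃ mΨ MΨ : ℝ, IsFrame ψ mΨ MΨ) ∧
      ‖adjoint A1 ∘L (SΦinv ∘L TΦ) - adjoint A2 ∘L (SΨinv ∘L TΨ)‖ ≤
        (2 * Real.sqrt q * ‖A1‖ + Real.sqrt mΦ * ‖A1 - A2‖) / mΦ :=
  stmt18_general φ ψ mΦ MΦ md Md q qΛ UΦ UΨ TΦ TΨ SΦ SΦinv SΨ SΨinv A1 A2 Λ hUΦ hUΨ hTΦ hTΨ hSΦ hSΨ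
    hSΦ1 hSΨ1 hΦ hΛ hdual hqs hq hqΛs hqΛ hcase

end
end
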